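/- arXiv:2112.00541 — 4 statements merged into one kernel-verified Lean document; each statement's English description precedes it below -/
import Mathlib

section
/- Let F be a Drinfel'd twist on a bialgebra H over a commutative ring R. Then the twisted coproduct Δ_F : H → H ⊗ H, Δ_F(x) := F · Δ(x) · F⁻¹, is an R-algebra homomorphism (Δ_F(x·y) = Δ_F(x) · Δ_F(y)) and is coassociative: (Δ_F ⊗ id) ∘ Δ_F = (id ⊗ Δ_F) ∘ Δ_F. -/
/-!
Write `Δ_F = F · Δ(-) · F⁻¹` as `Δ` conjugated by the unit `F`. Conjugation commutes with algebra
maps and composes multiplicatively, so `(Δ_F ⊗ id) ∘ Δ_F` is `(Δ ⊗ id) ∘ Δ` conjugated by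
`(F ⊗ 1) · (Δ ⊗ id)(F)`, and `(id ⊗ Δ_F) ∘ Δ_F` is `(id ⊗ Δ) ∘ Δ` conjugated by
`(1 ⊗ F) · (id ⊗ Δ)(F)`. Coassociativity of `Δ` identifies the conjugated maps and the cocycle
condition identifies the conjugating units.
-/

open scoped TensorProduct

noncomputable section

/-- `Δ ⊗ id` as an algebra homomorphism `H ⊗ H → (H ⊗ H) ⊗ H`. -/
def comulTensorId (R H : Type*) [CommRing R] [Ring H] [Bialgebra R H] :
    (H ⊗[R] H) →ₐ[R] (H ⊗[R] H) ⊗[R] H :=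
  Algebra.TensorProduct.map (Bialgebra.comulAlgHom R H) (AlgHom.id R H)

/-- `id ⊗ Δ` as an algebra homomorphism `H ⊗ H → H ⊗ (H ⊗ H)`. -/
def idTensorComul (R H : Type*) [CommRing R] [Ring H] [Bialgebra R H] :
    (H ⊗[R] H) →ₐ[R] H ⊗[R] (H ⊗[R] H) :=
  Algebra.TensorProduct.map (AlgHom.id R H) (Bialgebra.comulAlgHom R H)

/-- `F` is a Drinfel'd twist on the bialgebra `H` with two-sided inverse `Finv`:
it is invertible and satisfies the 2-cocycle condition
`(F ⊗ 1) · (Δ ⊗ id)(F) = (1 ⊗ F) · (id ⊗ Δ)(F)` in `H ⊗ H ⊗ H`. -/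
def IsDrinfeldTwist (R : Type*) {H : Type*} [CommRing R] [Ring H] [Bialgebra R H]
    (F Finv : H ⊗[R] H) : Prop :=
  F * Finv = 1 ∧ Finv * F = 1 ∧
    (TensorProduct.assoc R H H H) ((F ⊗ₜ[R] (1 : H)) * comulTensorId R H F) =
      ((1 : H) ⊗ₜ[R] F) * idTensorComul R H F

open Algebra.TensorProduct (map includeLeft includeRight)

namespace AlgHom

variable {R A B C : Type*} [CommSemiring R] [Semiring A] [Semiring B] [Semiring C]
  [Algebra R A] [Algebra R B] [Algebra R C]

def conjUnit (u : Bˣ) (f : A →ₐ[R] B) : A →ₐ[R] B where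
  toFun x := u * f x * ↑u⁻¹
  map_one' := by simp
  map_mul' x y := by simp only [map_mul, mul_assoc, Units.inv_mul_cancel_left]
  map_zero' := by simp
  map_add' x y := by simp only [map_add, mul_add, add_mul]
  commutes' r := by simp [Algebra.commutes, mul_assoc]

@[simp]
lemma conjUnit_apply (u : Bˣ) (f : A →ₐ[R] B) (x : A) : f.conjUnit u x = u * f x * ↑u⁻¹ := rfl

lemma conjUnit_comp (u : Cˣ) (g : B →ₐ[R] C) (f : A →ₐ[R] B) :
    (g.conjUnit u).comp f = (g.comp f).conjUnit u := rfl

lemma comp_conjUnit (g : B →ₐ[R] C) (u : Bˣ) (f : A →ₐ[R] B) :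
    g.comp (f.conjUnit u) = (g.comp f).conjUnit (Units.map g u) := by
  ext; simp

lemma conjUnit_conjUnit (u v : Bˣ) (f : A →ₐ[R] B) :
    (f.conjUnit u).conjUnit v = f.conjUnit (v * u) := by
  ext; simp [mul_assoc]

lemma map_conjUnit_id (u : Bˣ) (f : A →ₐ[R] B) :
    map (f.conjUnit u) (AlgHom.id R C) =
      (map f (AlgHom.id R C)).conjUnit (Units.map (includeLeft : B →ₐ[R] B ⊗[R] C) u) := by
  ext <;> simp

lemma map_id_conjUnit (u : Bˣ) (f : A →ₐ[R] B) :
    map (AlgHom.id R C) (f.conjUnit u) =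
      (map (AlgHom.id R C) f).conjUnit (Units.map (includeRight : B →ₐ[R] C ⊗[R] B) u) := by
  ext <;> simp

end AlgHom

namespace Bialgebra

variable {R H : Type*} [CommSemiring R] [Semiring H] [Bialgebra R H]

lemma comulAlgHom_coassoc :
    (Algebra.TensorProduct.assoc R R R H H H).toAlgHom.comp
        ((map (comulAlgHom R H) (AlgHom.id R H)).comp (comulAlgHom R H)) =
      (map (AlgHom.id R H) (comulAlgHom R H)).comp (comulAlgHom R H) :=
  AlgHom.toLinearMap_injective Coalgebra.coassoc

def twistedComul (u : (H ⊗[R] H)ˣ) : H →ₐ[R] H ⊗[R] H :=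
  (comulAlgHom R H).conjUnit u

lemma map_twistedComul_id_comp_twistedComul (u : (H ⊗[R] H)ˣ) :
    (map (twistedComul u) (AlgHom.id R H)).comp (twistedComul u) =
      ((map (comulAlgHom R H) (AlgHom.id R H)).comp (comulAlgHom R H)).conjUnit
        (Units.map (includeLeft : H ⊗[R] H →ₐ[R] (H ⊗[R] H) ⊗[R] H) u *
          Units.map (map (comulAlgHom R H) (AlgHom.id R H)) u) := by
  rw [twistedComul, AlgHom.map_conjUnit_id, AlgHom.conjUnit_comp, AlgHom.comp_conjUnit,
    AlgHom.conjUnit_conjUnit]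

lemma map_id_twistedComul_comp_twistedComul (u : (H ⊗[R] H)ˣ) :
    (map (AlgHom.id R H) (twistedComul u)).comp (twistedComul u) =
      ((map (AlgHom.id R H) (comulAlgHom R H)).comp (comulAlgHom R H)).conjUnit
        (Units.map (includeRight : H ⊗[R] H →ₐ[R] H ⊗[R] (H ⊗[R] H)) u *
          Units.map (map (AlgHom.id R H) (comulAlgHom R H)) u) := by
  rw [twistedComul, AlgHom.map_id_conjUnit, AlgHom.conjUnit_comp, AlgHom.comp_conjUnit,
    AlgHom.conjUnit_conjUnit]

theorem twistedComul_coassoc (u : (H ⊗[R] H)ˣ)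
    (hu : Algebra.TensorProduct.assoc R R R H H H
        (((u : H ⊗[R] H) ⊗ₜ[R] (1 : H)) * map (comulAlgHom R H) (AlgHom.id R H) u) =
      ((1 : H) ⊗ₜ[R] (u : H ⊗[R] H)) * map (AlgHom.id R H) (comulAlgHom R H) u) :
    (Algebra.TensorProduct.assoc R R R H H H).toAlgHom.comp
        ((map (twistedComul u) (AlgHom.id R H)).comp (twistedComul u)) =
      (map (AlgHom.id R H) (twistedComul u)).comp (twistedComul u) := by
  rw [map_twistedComul_id_comp_twistedComul, AlgHom.comp_conjUnit,
    comulAlgHom_coassoc, map_id_twistedComul_comp_twistedComul]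
  congr 1
  ext
  simpa using hu

end Bialgebra

/-- The twisted coproduct `Δ_F(x) := F · Δ(x) · F⁻¹` of a Drinfel'd
twist `F` on a bialgebra `H` is an `R`-algebra homomorphism and is coassociative:
`(Δ_F ⊗ id) ∘ Δ_F = (id ⊗ Δ_F) ∘ Δ_F`. -/
theorem twisted_coproduct_isAlgHom_and_coassociative
    (R : Type*) [CommRing R] (H : Type*) [Ring H] [Bialgebra R H]
    (F Finv : H ⊗[R] H) (hF : IsDrinfeldTwist R F Finv) :
    ∃ φ : H →ₐ[R] H ⊗[R] H,
      (∀ x : H, φ x = F * Coalgebra.comul (R := R) x * Finv) ∧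
      ∀ x : H,
        (TensorProduct.assoc R H H H)
            ((Algebra.TensorProduct.map φ (AlgHom.id R H)) (φ x)) =
          (Algebra.TensorProduct.map (AlgHom.id R H) φ) (φ x) := by
  obtain ⟨hFFinv, hFinvF, hcocycle⟩ := hF
  let u : (H ⊗[R] H)ˣ := ⟨F, Finv, hFFinv, hFinvF⟩
  exact ⟨Bialgebra.twistedComul u, fun x => rfl,
    fun x => congr($(Bialgebra.twistedComul_coassoc u hcocycle) x)⟩
end
end

section
/- Let F be a Drinfel'd twist on a bialgebra H over a commutative ring R and let ℛ := F₂₁ · F⁻¹ be the associated R-matrix, where F₂₁ := τ(F) and τ is the flip of H ⊗ H. Then ℛ is invertible with ℛ⁻¹ = τ(ℛ) (triangularity). If moreover H is cocommutative (τ ∘ Δ = Δ), then for all x ∈ H one has τ(Δ_F(x)) = ℛ · Δ_F(x) · ℛ⁻¹, where Δ_F(x) := F · Δ(x) · F⁻¹ is the twisted coproduct. -/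
open scoped TensorProduct

noncomputable section

/-- The `R`-matrix `ℛ := F₂₁ · F⁻¹` associated to a Drinfel'd twist, where
`F₂₁ = τ(F)` and `τ` is the flip of `H ⊗ H`. -/
def Rmat (R : Type*) {H : Type*} [CommRing R] [Ring H] [Bialgebra R H]
    (F Finv : H ⊗[R] H) : H ⊗[R] H :=
  (Algebra.TensorProduct.comm R H H) F * Finv

/-- The `R`-matrix `ℛ = F₂₁ · F⁻¹` of a Drinfel'd twist is invertible
with `ℛ⁻¹ = τ(ℛ)` (triangularity); if moreover `H` is cocommutative, then
`τ(Δ_F(x)) = ℛ · Δ_F(x) · ℛ⁻¹` for the twisted coproduct `Δ_F(x) = F · Δ(x) · F⁻¹`. -/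
theorem Rmatrix_triangular_and_quasi_cocommutativity
    (R : Type*) [CommRing R] (H : Type*) [Ring H] [Bialgebra R H]
    (F Finv : H ⊗[R] H) (hF : IsDrinfeldTwist R F Finv) :
    (Rmat R F Finv * (Algebra.TensorProduct.comm R H H) (Rmat R F Finv) = 1 ∧
      (Algebra.TensorProduct.comm R H H) (Rmat R F Finv) * Rmat R F Finv = 1) ∧
    ((∀ x : H, (Algebra.TensorProduct.comm R H H) (Coalgebra.comul (R := R) x) =
        Coalgebra.comul (R := R) x) →
      ∀ x : H,
        (Algebra.TensorProduct.comm R H H) (F * Coalgebra.comul (R := R) x * Finv) =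
          Rmat R F Finv * (F * Coalgebra.comul (R := R) x * Finv) *
            (Algebra.TensorProduct.comm R H H) (Rmat R F Finv)) := by
  obtain ⟨h1, h2, -⟩ := hF
  set τ : H ⊗[R] H ≃ₐ[R] H ⊗[R] H := Algebra.TensorProduct.comm R H H with hτ
  have hττ : ∀ x : H ⊗[R] H, τ (τ x) = x := fun x =>
    x.induction_on (by simp) (fun a b => by simp [hτ])
      (fun a b ha hb => by simp only [map_add, ha, hb])
  have hR : Rmat R F Finv = τ F * Finv := rfl
  have hτR : τ (Rmat R F Finv) = F * τ Finv := by
    rw [hR, map_mul, hττ]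
  have hA : Rmat R F Finv * τ (Rmat R F Finv) = 1 := by
    rw [hτR, hR, mul_assoc, ← mul_assoc Finv, h2, one_mul, ← map_mul, h1, map_one]
  have hB : τ (Rmat R F Finv) * Rmat R F Finv = 1 := by
    rw [hτR, hR, mul_assoc, ← mul_assoc (τ Finv), ← map_mul, h2, map_one, one_mul, h1]
  refine ⟨⟨hA, hB⟩, fun hcc x => ?_⟩
  rw [hτR, hR, map_mul, map_mul, hcc]
  rw [show τ F * Finv * (F * Coalgebra.comul (R := R) x * Finv) * (F * τ Finv)
      = τ F * (Finv * F) * Coalgebra.comul (R := R) x * ((Finv * F) * τ Finv) by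
    noncomm_ring]
  rw [h2, mul_one, one_mul]
end
end

section
/- Let H be a cocommutative bialgebra over a commutative ring R, F a Drinfel'd twist on H, Δ_F(x) := F · Δ(x) · F⁻¹ the twisted coproduct, and ℛ := F₂₁ · F⁻¹ = Σ_k R^k ⊗ R_k the associated R-matrix. Then (Δ_F ⊗ id)(ℛ) = ℛ₁₃ · ℛ₂₃ in H ⊗ H ⊗ H, where ℛ₁₃ := Σ_k R^k ⊗ 1 ⊗ R_k and ℛ₂₃ := 1 ⊗ ℛ. -/
/-!
Write `X₁₂, X₁₃, X₂₃` for the legs of `X ∈ H ⊗ H` in `H ⊗ H ⊗ H`, `Δ₁ = (Δ ⊗ id)`, `Δ₂ = (id ⊗ Δ)`.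
Transporting the cocycle identity `F₁₂ Δ₁(F) = F₂₃ Δ₂(F)` along the flip `σ` of the last two legs
and along the cyclic permutation of the legs gives, by cocommutativity,
`F₁₃ σ(Δ₁ F) = F₃₂ Δ₂(F)` and `F₃₁ σ(Δ₁ F) = F₁₂ Δ₁(F₂₁)`, hence
`F₁₂ Δ₁(F₂₁) = F₃₁ F₁₃⁻¹ F₃₂ Δ₂(F)`. Inverting the cocycle identity gives
`Δ₁(F⁻¹) F₁₂⁻¹ = Δ₂(F⁻¹) F₂₃⁻¹`, and the product of the two is `(F₃₁ F₁₃⁻¹)(F₃₂ F₂₃⁻¹) = ℛ₁₃ ℛ₂₃`.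
-/

open scoped TensorProduct

noncomputable section

/-- The bialgebra `H` is cocommutative: `τ ∘ Δ = Δ`. -/
def IsCocommutative (R : Type*) (H : Type*) [CommRing R] [Ring H] [Bialgebra R H] : Prop :=
  ∀ x : H, (Algebra.TensorProduct.comm R H H) (Coalgebra.comul (R := R) x) =
    Coalgebra.comul (R := R) x

/-- The twisted coproduct `Δ_F(x) := F · Δ(x) · F⁻¹`, as an `R`-linear map. -/
def comulF (R : Type*) {H : Type*} [CommRing R] [Ring H] [Bialgebra R H]
    (F Finv : H ⊗[R] H) : H →ₗ[R] H ⊗[R] H :=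
  (LinearMap.mulLeft R F).comp
    ((LinearMap.mulRight R Finv).comp (Coalgebra.comul (R := R)))

namespace DrinfeldTwist

section Legs

variable (R A : Type*) [CommSemiring R] [Semiring A] [Algebra R A]

def leg12 : A ⊗[R] A →ₐ[R] A ⊗[R] (A ⊗[R] A) :=
  Algebra.TensorProduct.map (AlgHom.id R A) Algebra.TensorProduct.includeLeft

def leg13 : A ⊗[R] A →ₐ[R] A ⊗[R] (A ⊗[R] A) :=
  Algebra.TensorProduct.map (AlgHom.id R A) Algebra.TensorProduct.includeRight

def leg23 : A ⊗[R] A →ₐ[R] A ⊗[R] (A ⊗[R] A) :=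
  Algebra.TensorProduct.includeRight

def swap23 : A ⊗[R] (A ⊗[R] A) ≃ₐ[R] A ⊗[R] (A ⊗[R] A) :=
  Algebra.TensorProduct.congr AlgEquiv.refl (Algebra.TensorProduct.comm R A A)

/-- `x ⊗ y ⊗ z ↦ y ⊗ z ⊗ x`. -/
def cycle : A ⊗[R] (A ⊗[R] A) ≃ₐ[R] A ⊗[R] (A ⊗[R] A) :=
  (Algebra.TensorProduct.comm R A (A ⊗[R] A)).trans (Algebra.TensorProduct.assoc R R R A A A)

variable {R A}

theorem assoc_tmul_one (w : A ⊗[R] A) :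
    Algebra.TensorProduct.assoc R R R A A A (w ⊗ₜ 1) = leg12 R A w := by
  induction w using TensorProduct.induction_on with
  | zero => simp
  | tmul x y => simp [leg12]
  | add a b ha hb => rw [TensorProduct.add_tmul, map_add, ha, hb, map_add]

theorem swap23_leg12 (w : A ⊗[R] A) : swap23 R A (leg12 R A w) = leg13 R A w := by
  induction w using TensorProduct.induction_on <;> simp_all [swap23, leg12, leg13]

theorem swap23_leg23 (w : A ⊗[R] A) :
    swap23 R A (leg23 R A w) = leg23 R A (Algebra.TensorProduct.comm R A A w) := by
  induction w using TensorProduct.induction_on <;> simp_all [swap23, leg23]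

theorem cycle_leg12 (w : A ⊗[R] A) :
    cycle R A (leg12 R A w) = leg13 R A (Algebra.TensorProduct.comm R A A w) := by
  induction w using TensorProduct.induction_on <;> simp_all [cycle, leg12, leg13]

theorem cycle_leg23 (w : A ⊗[R] A) : cycle R A (leg23 R A w) = leg12 R A w := by
  induction w using TensorProduct.induction_on <;> simp_all [cycle, leg23, leg12, TensorProduct.add_tmul]

theorem cycle_assoc_tmul (u : A ⊗[R] A) (z : A) :
    cycle R A (Algebra.TensorProduct.assoc R R R A A A (u ⊗ₜ z)) =
      swap23 R A (Algebra.TensorProduct.assoc R R R A A A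
        (Algebra.TensorProduct.comm R A A u ⊗ₜ z)) := by
  induction u using TensorProduct.induction_on <;>
    simp_all [cycle, swap23, TensorProduct.add_tmul]

end Legs

section Bialgebra

variable {R H : Type*} [CommRing R] [Ring H] [Bialgebra R H]

variable (R H) in
def comulLeft : H ⊗[R] H →ₐ[R] H ⊗[R] (H ⊗[R] H) :=
  (Algebra.TensorProduct.assoc R R R H H H).toAlgHom.comp (comulTensorId R H)

theorem comulLeft_tmul (x y : H) :
    comulLeft R H (x ⊗ₜ y) =
      Algebra.TensorProduct.assoc R R R H H H (Coalgebra.comul (R := R) x ⊗ₜ y) := by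
  simp [comulLeft, comulTensorId]

theorem cycle_idTensorComul (w : H ⊗[R] H) :
    cycle R H (idTensorComul R H w) = comulLeft R H (Algebra.TensorProduct.comm R H H w) := by
  induction w using TensorProduct.induction_on <;>
    simp_all [cycle, idTensorComul, comulLeft_tmul]

theorem swap23_idTensorComul (hcc : IsCocommutative R H) (w : H ⊗[R] H) :
    swap23 R H (idTensorComul R H w) = idTensorComul R H w := by
  induction w using TensorProduct.induction_on <;>
    simp_all [swap23, idTensorComul, hcc _]

theorem cycle_comulLeft (hcc : IsCocommutative R H) (w : H ⊗[R] H) :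
    cycle R H (comulLeft R H w) = swap23 R H (comulLeft R H w) := by
  induction w using TensorProduct.induction_on <;>
    simp_all [comulLeft_tmul, cycle_assoc_tmul, hcc _]

theorem map_comulF_id (F Finv w : H ⊗[R] H) :
    TensorProduct.map (comulF R F Finv) LinearMap.id w =
      (F ⊗ₜ 1) * comulTensorId R H w * (Finv ⊗ₜ 1) := by
  induction w using TensorProduct.induction_on with
  | zero => simp
  | tmul x y => simp [comulF, comulTensorId, mul_assoc]
  | add a b ha hb => simp_all [mul_add, add_mul]

theorem assoc_map_comulF_id (F Finv w : H ⊗[R] H) :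
    TensorProduct.assoc R H H H (TensorProduct.map (comulF R F Finv) LinearMap.id w) =
      leg12 R H F * comulLeft R H w * leg12 R H Finv := by
  change Algebra.TensorProduct.assoc R R R H H H _ = _
  rw [map_comulF_id, map_mul, map_mul, assoc_tmul_one, assoc_tmul_one]
  rfl

end Bialgebra

section Twist

variable {R H : Type*} [CommRing R] [Ring H] [Bialgebra R H] {F Finv : H ⊗[R] H}

theorem cocycle_legs (hF : IsDrinfeldTwist R F Finv) :
    leg12 R H F * comulLeft R H F = leg23 R H F * idTensorComul R H F := by
  have h := hF.2.2
  change Algebra.TensorProduct.assoc R R R H H H _ = _ at h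
  rwa [map_mul, assoc_tmul_one] at h

theorem cocycle_legs_inv (hF : IsDrinfeldTwist R F Finv) :
    comulLeft R H Finv * leg12 R H Finv = idTensorComul R H Finv * leg23 R H Finv := by
  refine left_inv_eq_right_inv (a := leg12 R H F * comulLeft R H F) ?_ ?_
  · rw [mul_assoc, ← mul_assoc (leg12 R H Finv), map_mul_eq_one _ hF.2.1, one_mul,
      map_mul_eq_one _ hF.2.1]
  · rw [cocycle_legs hF, mul_assoc, ← mul_assoc (idTensorComul R H F),
      map_mul_eq_one _ hF.1, one_mul, map_mul_eq_one _ hF.1]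

theorem cocycle_swap23 (hcc : IsCocommutative R H) (hF : IsDrinfeldTwist R F Finv) :
    leg13 R H F * swap23 R H (comulLeft R H F) =
      leg23 R H (Algebra.TensorProduct.comm R H H F) * idTensorComul R H F := by
  simpa only [map_mul, swap23_leg12, swap23_leg23, swap23_idTensorComul hcc] using
    congrArg (swap23 R H) (cocycle_legs hF)

theorem cocycle_cycle (hcc : IsCocommutative R H) (hF : IsDrinfeldTwist R F Finv) :
    leg13 R H (Algebra.TensorProduct.comm R H H F) * swap23 R H (comulLeft R H F) =
      leg12 R H F * comulLeft R H (Algebra.TensorProduct.comm R H H F) := by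
  simpa only [map_mul, cycle_leg12, cycle_leg23, cycle_idTensorComul, cycle_comulLeft hcc] using
    congrArg (cycle R H) (cocycle_legs hF)

theorem leg12_mul_comulLeft_comm (hcc : IsCocommutative R H) (hF : IsDrinfeldTwist R F Finv) :
    leg12 R H F * comulLeft R H (Algebra.TensorProduct.comm R H H F) =
      leg13 R H (Algebra.TensorProduct.comm R H H F) * leg13 R H Finv *
        (leg23 R H (Algebra.TensorProduct.comm R H H F) * idTensorComul R H F) := by
  rw [← cocycle_cycle hcc hF, ← cocycle_swap23 hcc hF, mul_assoc, ← mul_assoc (leg13 R H Finv),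
    map_mul_eq_one _ hF.2.1, one_mul]

end Twist

end DrinfeldTwist

/-- For a Drinfel'd twist `F` on a cocommutative bialgebra `H`, the
`R`-matrix `ℛ = F₂₁ · F⁻¹` satisfies `(Δ_F ⊗ id)(ℛ) = ℛ₁₃ · ℛ₂₃` in `H ⊗ H ⊗ H`. -/
theorem Rmatrix_comulF_tensor_id
    (R : Type*) [CommRing R] (H : Type*) [Ring H] [Bialgebra R H]
    (hcc : IsCocommutative R H)
    (F Finv : H ⊗[R] H) (hF : IsDrinfeldTwist R F Finv) :
    (TensorProduct.assoc R H H H)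
        ((TensorProduct.map (comulF R F Finv) LinearMap.id) (Rmat R F Finv)) =
      ((Algebra.TensorProduct.map (AlgHom.id R H) Algebra.TensorProduct.includeRight)
          (Rmat R F Finv)) *
        ((1 : H) ⊗ₜ[R] Rmat R F Finv) := by
  open DrinfeldTwist in
  calc _ = leg12 R H F * comulLeft R H (Algebra.TensorProduct.comm R H H F) *
        (comulLeft R H Finv * leg12 R H Finv) := by
        rw [assoc_map_comulF_id, Rmat, map_mul]
        simp only [mul_assoc]
    _ = leg13 R H (Algebra.TensorProduct.comm R H H F) * leg13 R H Finv *
        (leg23 R H (Algebra.TensorProduct.comm R H H F) *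
          (idTensorComul R H F * idTensorComul R H Finv) * leg23 R H Finv) := by
        rw [leg12_mul_comulLeft_comm hcc hF, cocycle_legs_inv hF]
        simp only [mul_assoc]
    _ = leg13 R H (Rmat R F Finv) * leg23 R H (Rmat R F Finv) := by
        rw [map_mul_eq_one _ hF.1, mul_one, ← map_mul, ← map_mul]
        rfl
end
end

section
/- Let H be a cocommutative bialgebra over a commutative ring R, F a Drinfel'd twist on H, Δ_F(x) := F · Δ(x) · F⁻¹ the twisted coproduct, and ℛ := F₂₁ · F⁻¹ = Σ_k R^k ⊗ R_k the associated R-matrix. Then (id ⊗ Δ_F)(ℛ) = ℛ₁₃ · ℛ₁₂ in H ⊗ H ⊗ H, where ℛ₁₃ := Σ_k R^k ⊗ 1 ⊗ R_k and ℛ₁₂ := ℛ ⊗ 1. -/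
open scoped TensorProduct

noncomputable section

/-!
Write `ℛ = F₂₁ F⁻¹`. The left-hand side is `F₂₃ (id ⊗ Δ)(F₂₁) · (id ⊗ Δ)(F⁻¹) F₂₃⁻¹`, and inverting
the cocycle condition turns the second factor into `(Δ ⊗ id)(F⁻¹) F₁₂⁻¹`. Moving the legs of the
cocycle condition by the cycle `x ⊗ y ⊗ z ↦ z ⊗ x ⊗ y` gives `F₂₃ (id ⊗ Δ)(F₂₁) = (F₂₁)₁₃ P`, and
by the transposition of the first two legs gives `(F₂₁)₁₂ (Δ ⊗ id)(F) = F₁₃ P'`, where `P` and `P'`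
are `(id ⊗ Δ)(F)` with its legs permuted. Cocommutativity makes `(Δ ⊗ id)(F)` invariant under the
transposition and forces `P = P'`, since the two permutations differ by a flip inside `Δ`.
Substituting `P = F₁₃⁻¹ (F₂₁)₁₂ (Δ ⊗ id)(F)`, the factors `(Δ ⊗ id)(F^{±1})` cancel, leaving
`ℛ₁₃ ℛ₁₂`.
-/

namespace Algebra.TensorProduct

variable {R A B C : Type*} [CommSemiring R] [Semiring A] [Semiring B] [Semiring C]
  [Algebra R A] [Algebra R B] [Algebra R C]

variable (R A B C) in
def cycleLegs : A ⊗[R] (B ⊗[R] C) ≃ₐ[R] C ⊗[R] (A ⊗[R] B) :=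
  (Algebra.TensorProduct.assoc R R R A B C).symm.trans
    (Algebra.TensorProduct.comm R (A ⊗[R] B) C)

@[simp]
theorem cycleLegs_tmul (a : A) (b : B) (c : C) :
    cycleLegs R A B C (a ⊗ₜ (b ⊗ₜ c)) = c ⊗ₜ (a ⊗ₜ b) :=
  rfl

theorem cycleLegs_eq_leftComm_comp :
    (cycleLegs R A B C).toAlgHom =
      (leftComm R A C B).toAlgHom.comp
        (map (AlgHom.id R A) (Algebra.TensorProduct.comm R B C).toAlgHom) := by
  ext <;> simp [one_def]

theorem leftComm_comp_assoc :
    (leftComm R A B C).toAlgHom.comp (Algebra.TensorProduct.assoc R R R A B C).toAlgHom =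
      (Algebra.TensorProduct.assoc R R R B A C).toAlgHom.comp
        (map (Algebra.TensorProduct.comm R A B).toAlgHom (AlgHom.id R C)) := by
  ext <;> simp [one_def]

theorem cycleLegs_comp_assoc :
    (cycleLegs R A B C).toAlgHom.comp (Algebra.TensorProduct.assoc R R R A B C).toAlgHom =
      (Algebra.TensorProduct.comm R (A ⊗[R] B) C).toAlgHom := by
  ext <;> simp [one_def]

@[simp]
theorem assoc_tmul_one (x : A ⊗[R] B) :
    Algebra.TensorProduct.assoc R R R A B C (x ⊗ₜ 1) = map (AlgHom.id R A) includeLeft x := by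
  induction x using TensorProduct.induction_on <;> simp_all [TensorProduct.add_tmul]

@[simp]
theorem leftComm_map_includeLeft (x : A ⊗[R] B) :
    leftComm R A B C (map (AlgHom.id R A) includeLeft x) =
      map (AlgHom.id R B) includeLeft (Algebra.TensorProduct.comm R A B x) := by
  induction x using TensorProduct.induction_on <;> simp_all

@[simp]
theorem leftComm_includeRight (x : B ⊗[R] C) :
    leftComm R A B C (includeRight x) = map (AlgHom.id R B) includeRight x := by
  induction x using TensorProduct.induction_on <;> simp_all [TensorProduct.tmul_add]

@[simp]
theorem cycleLegs_map_includeLeft (x : A ⊗[R] B) :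
    cycleLegs R A B C (map (AlgHom.id R A) includeLeft x) = includeRight x := by
  induction x using TensorProduct.induction_on <;> simp_all [TensorProduct.tmul_add]

@[simp]
theorem cycleLegs_includeRight (x : B ⊗[R] C) :
    cycleLegs R A B C (includeRight x) =
      map (AlgHom.id R C) includeRight (Algebra.TensorProduct.comm R B C x) := by
  induction x using TensorProduct.induction_on <;> simp_all [TensorProduct.tmul_add]

end Algebra.TensorProduct

open Algebra.TensorProduct

section Bialgebra

variable {R H : Type*} [CommRing R] [Ring H] [Bialgebra R H]

variable (R H) in
abbrev assocComulTensorId : H ⊗[R] H →ₐ[R] H ⊗[R] (H ⊗[R] H) :=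
  (Algebra.TensorProduct.assoc R R R H H H).toAlgHom.comp (comulTensorId R H)

theorem cycleLegs_assocComulTensorId (x : H ⊗[R] H) :
    cycleLegs R H H H (assocComulTensorId R H x) =
      idTensorComul R H (Algebra.TensorProduct.comm R H H x) := by
  have h : (cycleLegs R H H H).toAlgHom.comp (assocComulTensorId R H) =
      (idTensorComul R H).comp (Algebra.TensorProduct.comm R H H).toAlgHom := by
    rw [← AlgHom.comp_assoc, cycleLegs_comp_assoc, comulTensorId, comm_comp_map]
    rfl
  exact DFunLike.congr_fun h x

namespace IsCocommutative

variable (hcc : IsCocommutative R H)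
include hcc

theorem comm_comp_comulAlgHom :
    (Algebra.TensorProduct.comm R H H).toAlgHom.comp (Bialgebra.comulAlgHom R H) =
      Bialgebra.comulAlgHom R H :=
  AlgHom.ext hcc

theorem leftComm_assocComulTensorId (x : H ⊗[R] H) :
    leftComm R H H H (assocComulTensorId R H x) = assocComulTensorId R H x := by
  have h : (leftComm R H H H).toAlgHom.comp (assocComulTensorId R H) =
      assocComulTensorId R H := by
    rw [← AlgHom.comp_assoc, leftComm_comp_assoc, AlgHom.comp_assoc, comulTensorId,
      ← map_comp, AlgHom.comp_id, hcc.comm_comp_comulAlgHom]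
    rfl
  exact DFunLike.congr_fun h x

theorem cycleLegs_idTensorComul (x : H ⊗[R] H) :
    cycleLegs R H H H (idTensorComul R H x) = leftComm R H H H (idTensorComul R H x) := by
  have h : (cycleLegs R H H H).toAlgHom.comp (idTensorComul R H) =
      (leftComm R H H H).toAlgHom.comp (idTensorComul R H) := by
    rw [cycleLegs_eq_leftComm_comp, AlgHom.comp_assoc, idTensorComul, ← map_id_comp,
      hcc.comm_comp_comulAlgHom]
  exact DFunLike.congr_fun h x

end IsCocommutative

end Bialgebra

section Twist

variable {R H : Type*} [CommRing R] [Ring H] [Bialgebra R H]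

theorem map_id_comulF_apply (F Finv z : H ⊗[R] H) :
    TensorProduct.map LinearMap.id (comulF R F Finv) z =
      includeRight F * idTensorComul R H z * includeRight Finv := by
  induction z using TensorProduct.induction_on with
  | zero => simp
  | tmul a b => simp [comulF, idTensorComul, mul_assoc]
  | add x y hx hy => rw [map_add, map_add, hx, hy, mul_add, add_mul]

namespace IsDrinfeldTwist

variable {F Finv : H ⊗[R] H} (hF : IsDrinfeldTwist R F Finv)
include hF

theorem map_includeLeft_mul_assocComulTensorId :
    map (AlgHom.id R H) includeLeft F * assocComulTensorId R H F =
      includeRight F * idTensorComul R H F := by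
  have h : Algebra.TensorProduct.assoc R R R H H H (F ⊗ₜ 1 * comulTensorId R H F) =
      includeRight F * idTensorComul R H F := hF.2.2
  rwa [map_mul, assoc_tmul_one] at h

theorem map_mul_inv {B : Type*} [Semiring B] [Algebra R B] (φ : H ⊗[R] H →ₐ[R] B) :
    φ F * φ Finv = 1 := by
  rw [← map_mul, hF.1, map_one]

theorem map_inv_mul {B : Type*} [Semiring B] [Algebra R B] (φ : H ⊗[R] H →ₐ[R] B) :
    φ Finv * φ F = 1 := by
  rw [← map_mul, hF.2.1, map_one]

theorem idTensorComul_inv_mul_includeRight_inv :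
    idTensorComul R H Finv * includeRight Finv =
      assocComulTensorId R H Finv * map (AlgHom.id R H) includeLeft Finv := by
  refine left_inv_eq_right_inv (a := includeRight F * idTensorComul R H F) ?_ ?_
  · rw [mul_assoc, ← mul_assoc (includeRight Finv), hF.map_inv_mul, one_mul,
      hF.map_inv_mul]
  · rw [← hF.map_includeLeft_mul_assocComulTensorId, mul_assoc,
      ← mul_assoc (assocComulTensorId R H F), hF.map_mul_inv, one_mul, hF.map_mul_inv]

theorem includeRight_mul_idTensorComul_comm :
    includeRight F * idTensorComul R H (Algebra.TensorProduct.comm R H H F) =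
      map (AlgHom.id R H) includeRight (Algebra.TensorProduct.comm R H H F) *
        cycleLegs R H H H (idTensorComul R H F) := by
  have h := congr(cycleLegs R H H H $(hF.map_includeLeft_mul_assocComulTensorId))
  rwa [map_mul, map_mul, cycleLegs_map_includeLeft, cycleLegs_assocComulTensorId,
    cycleLegs_includeRight] at h

theorem map_includeLeft_comm_mul_assocComulTensorId (hcc : IsCocommutative R H) :
    map (AlgHom.id R H) includeLeft (Algebra.TensorProduct.comm R H H F) *
        assocComulTensorId R H F =
      map (AlgHom.id R H) includeRight F * leftComm R H H H (idTensorComul R H F) := by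
  have h := congr(leftComm R H H H $(hF.map_includeLeft_mul_assocComulTensorId))
  rwa [map_mul, map_mul, leftComm_map_includeLeft, hcc.leftComm_assocComulTensorId,
    leftComm_includeRight] at h

end IsDrinfeldTwist

end Twist

/-- For a Drinfel'd twist `F` on a cocommutative bialgebra `H`, the
`R`-matrix `ℛ = F₂₁ · F⁻¹` satisfies `(id ⊗ Δ_F)(ℛ) = ℛ₁₃ · ℛ₁₂` in `H ⊗ H ⊗ H`. -/
theorem Rmatrix_id_tensor_comulF
    (R : Type*) [CommRing R] (H : Type*) [Ring H] [Bialgebra R H]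
    (hcc : IsCocommutative R H)
    (F Finv : H ⊗[R] H) (hF : IsDrinfeldTwist R F Finv) :
    (TensorProduct.map LinearMap.id (comulF R F Finv)) (Rmat R F Finv) =
      ((Algebra.TensorProduct.map (AlgHom.id R H) Algebra.TensorProduct.includeRight)
          (Rmat R F Finv)) *
        ((Algebra.TensorProduct.map (AlgHom.id R H) Algebra.TensorProduct.includeLeft)
          (Rmat R F Finv)) := by
  set leg12 : H ⊗[R] H →ₐ[R] H ⊗[R] (H ⊗[R] H) := map (AlgHom.id R H) includeLeft
  set leg13 : H ⊗[R] H →ₐ[R] H ⊗[R] (H ⊗[R] H) := map (AlgHom.id R H) includeRight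
  set τF := Algebra.TensorProduct.comm R H H F
  have hperm : leftComm R H H H (idTensorComul R H F) =
      leg13 Finv * (leg12 τF * assocComulTensorId R H F) := by
    rw [hF.map_includeLeft_comm_mul_assocComulTensorId hcc, ← mul_assoc, hF.map_inv_mul,
      one_mul]
  rw [map_id_comulF_apply, Rmat, map_mul]
  calc includeRight F * (idTensorComul R H τF * idTensorComul R H Finv) * includeRight Finv
      = includeRight F * idTensorComul R H τF *
          (idTensorComul R H Finv * includeRight Finv) := by simp only [mul_assoc]
    _ = leg13 τF * leftComm R H H H (idTensorComul R H F) *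
          (assocComulTensorId R H Finv * leg12 Finv) := by
      rw [hF.includeRight_mul_idTensorComul_comm, hcc.cycleLegs_idTensorComul,
        hF.idTensorComul_inv_mul_includeRight_inv]
    _ = leg13 τF * leg13 Finv *
          (leg12 τF * (assocComulTensorId R H F * assocComulTensorId R H Finv) * leg12 Finv) := by
      rw [hperm]; simp only [mul_assoc]
    _ = leg13 (τF * Finv) * leg12 (τF * Finv) := by
      rw [hF.map_mul_inv, mul_one, map_mul, map_mul]
end
end
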